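/- Low-frequency elliptic estimate (Lemma 3.2, first part, circle case). Let α ∈ (0,2), let χ : 𝕋 → [0,∞) be bounded measurable, and let G₀ : ℝ → [0,1] be a smooth function with G₀(ξ) = 0 for |ξ| > 1/4. Then for every z ∈ ℝ \ {0}, every h > 0 and every u ∈ C^∞(𝕋): ‖G₀(hD)u‖_{L²(𝕋)} ≤ (1/(4^α z²)) ‖u‖_{L²} + (1/z²) ‖P(h,z)u‖_{L²} + (h^{α/2}/|z|) ‖√χ‖_{L^∞} ‖√χ · u‖_{L²}. -/

import Mathlib

open MeasureTheory Real Filter Complex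
open scoped Topology

noncomputable section

instance : Fact (0 < 2 * Real.pi) := ⟨by positivity⟩

/-- The circle `𝕋 = ℝ/2πℤ`. -/
abbrev Circ := AddCircle (2 * Real.pi)

/-- The squared `L²` norm on the circle. -/
def L2sq (u : Circ → ℂ) : ℝ := ∫ x : Circ, ‖u x‖ ^ 2

/-- The `L²` norm on the circle. -/
def L2norm (u : Circ → ℂ) : ℝ := (L2sq u) ^ ((1 : ℝ) / 2)

/-- A Fourier multiplier with symbol `m : ℤ → ℂ`. -/
def Mult (m : ℤ → ℂ) (u : Circ → ℂ) : Circ → ℂ :=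
  fun x => ∑' k : ℤ, m k * fourierCoeff u k * fourier k x

/-- The fractional derivative `|D|^s`, acting on Fourier coefficients by `|k|^s`. -/
def fracD (s : ℝ) (u : Circ → ℂ) : Circ → ℂ :=
  Mult (fun k => ((|(k : ℝ)| ^ s : ℝ) : ℂ)) u

/-- The semiclassical fractional derivative `|hD|^α`, acting by `|h k|^α`. -/
def fracDh (α h : ℝ) (u : Circ → ℂ) : Circ → ℂ :=
  Mult (fun k => ((|h * (k : ℝ)| ^ α : ℝ) : ℂ)) u

/-- A Fourier multiplier `G(hD)` with symbol `ξ ↦ G(ξ)`. -/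
def MultG (G : ℝ → ℝ) (h : ℝ) (u : Circ → ℂ) : Circ → ℂ :=
  Mult (fun k => ((G (h * (k : ℝ)) : ℝ) : ℂ)) u

/-- The semiclassical stationary operator `P(h,z) = |hD|^α − i z h^{α/2} χ − z²`. -/
def Pop (α h z : ℝ) (χ : Circ → ℝ) (u : Circ → ℂ) : Circ → ℂ :=
  fun x => fracDh α h u x - Complex.I * (z : ℂ) * ((h ^ (α / 2) : ℝ) : ℂ) * (χ x : ℂ) * u x
    - ((z ^ 2 : ℝ) : ℂ) * u x

/-- `u ∈ C^∞(𝕋)`: the periodic lift of `u` to `ℝ` is smooth. -/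
def SmoothT (u : Circ → ℂ) : Prop := ContDiff ℝ (⊤ : ℕ∞) fun x : ℝ => u (x : Circ)

/-- `f ∈ C^{0,β}(𝕋)`: `f` is bounded and `β`-Hölder continuous. -/
def MemHolderT (β : ℝ) (f : Circ → ℝ) : Prop :=
  (∃ M : ℝ, ∀ x, |f x| ≤ M) ∧ ∃ C : ℝ, ∀ x y, |f x - f y| ≤ C * dist x y ^ β

/-- Geometric control condition on the circle: `χ` is bounded below by a positive
constant on some nonempty open set. -/
def GCC (χ : Circ → ℝ) : Prop :=
  ∃ O : Set Circ, IsOpen O ∧ O.Nonempty ∧ ∃ c : ℝ, 0 < c ∧ ∀ x ∈ O, c ≤ χ x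

/-- The squared Sobolev `H^s` norm, `Σ (1+k²)^s |û(k)|²`. -/
def HsNormSq (s : ℝ) (u : Circ → ℂ) : ℝ :=
  ∑' k : ℤ, (1 + (k : ℝ) ^ 2) ^ s * ‖fourierCoeff u k‖ ^ 2

/-- Membership in the Sobolev space `H^s(𝕋)`. -/
def MemHs (s : ℝ) (u : Circ → ℂ) : Prop :=
  Summable fun k : ℤ => (1 + (k : ℝ) ^ 2) ^ s * ‖fourierCoeff u k‖ ^ 2

/-- `u'` is the derivative of `u` on `[0,∞)` as a curve in `H^s(𝕋)`:
the difference quotients converge to `u' t` in the `H^s` norm. -/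
def DiffCurveOn (s : ℝ) (u u' : ℝ → Circ → ℂ) : Prop :=
  ∀ t : ℝ, 0 ≤ t →
    Tendsto (fun τ : ℝ =>
        HsNormSq s fun x => ((τ - t : ℝ) : ℂ)⁻¹ • (u τ x - u t x) - u' t x)
      (𝓝[Set.Ici 0 \ {t}] t) (𝓝 0)

/-- The energy of a solution. -/
def energy (α : ℝ) (u u' : ℝ → Circ → ℂ) (t : ℝ) : ℝ :=
  L2sq (fracD (α / 2) (u t)) + L2sq (u' t)


open AddCircle
open scoped ENNReal

lemma contMem {g : Circ → ℂ} (hg : Continuous g) : MemLp g 2 haarAddCircle := by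
  obtain ⟨M, hM⟩ := isCompact_univ.exists_bound_of_continuousOn hg.continuousOn
  exact MemLp.of_bound hg.aestronglyMeasurable M
    (Filter.Eventually.of_forall fun x => hM x (Set.mem_univ x))

lemma bddMem {g : Circ → ℂ} (hg : AEStronglyMeasurable g (haarAddCircle (T := 2 * Real.pi)))
    {M : ℝ} (hM : ∀ x, ‖g x‖ ≤ M) : MemLp g 2 haarAddCircle :=
  MemLp.of_bound hg M (Filter.Eventually.of_forall hM)

lemma bddInt {g : Circ → ℂ} (hg : AEStronglyMeasurable g (haarAddCircle (T := 2 * Real.pi)))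
    {M : ℝ} (hM : ∀ x, ‖g x‖ ≤ M) : Integrable g haarAddCircle :=
  memLp_one_iff_integrable.mp (MemLp.of_bound hg M (Filter.Eventually.of_forall hM))

lemma contInt {g : Circ → ℂ} (hg : Continuous g) : Integrable g haarAddCircle := by
  obtain ⟨M, hM⟩ := isCompact_univ.exists_bound_of_continuousOn hg.continuousOn
  exact bddInt hg.aestronglyMeasurable fun x => hM x (Set.mem_univ x)

lemma fc_congr {f g : Circ → ℂ} (h : f =ᵐ[(haarAddCircle (T := 2 * Real.pi))] g) (n : ℤ) :
    fourierCoeff f n = fourierCoeff g n := by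
  unfold fourierCoeff
  exact integral_congr_ae (h.mono fun x hx => by dsimp only; rw [hx])

lemma fc_fourier (j n : ℤ) :
    fourierCoeff (⇑(fourier j) : Circ → ℂ) n = if n = j then 1 else 0 := by
  have h1 : fourierCoeff (⇑(fourier j) : Circ → ℂ) n
      = fourierCoeff ((fourierLp 2 j : Lp ℂ 2 (haarAddCircle (T := 2 * Real.pi))) : Circ → ℂ) n :=
    (fc_congr (coeFn_fourierLp 2 j).symm n)
  rw [h1, ← fourierBasis_repr, ← coe_fourierBasis, fourierBasis.repr_self]
  classical
  rw [lp.single_apply]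
  split_ifs with h
  · subst h; simp
  · simp [Pi.single_apply, h]

lemma parseval {v : Circ → ℂ} (hv : MemLp v 2 (haarAddCircle (T := 2 * Real.pi))) :
    HasSum (fun k : ℤ => ‖fourierCoeff v k‖ ^ 2)
      (∫ t : Circ, ‖v t‖ ^ 2 ∂haarAddCircle) := by
  set f := hv.toLp v
  have hae : (f : Circ → ℂ) =ᵐ[haarAddCircle] v := hv.coeFn_toLp
  have hcoef : ∀ k, fourierCoeff v k = fourierCoeff (f : Circ → ℂ) k :=
    fun k => fc_congr hae.symm k
  have hint : ∫ t : Circ, ‖v t‖ ^ 2 ∂haarAddCircle = ∫ t : Circ, ‖(f : Circ → ℂ) t‖ ^ 2 ∂haarAddCircle :=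
    integral_congr_ae (hae.symm.mono fun x hx => by dsimp only; rw [hx])
  have hsum : Summable fun k : ℤ => ‖fourierCoeff (f : Circ → ℂ) k‖ ^ 2 := by
    have h2 : (0:ℝ) < (2 : ENNReal).toReal := by norm_num
    have := (lp.memℓp (fourierBasis.repr f)).summable h2
    refine this.congr fun k => ?_
    rw [fourierBasis_repr]
    norm_num
  have := hsum.hasSum
  rw [tsum_sq_fourierCoeff f] at this
  simp only [← hcoef] at this ⊢
  rwa [hint]

lemma bessel {v : Circ → ℂ} (hv : MemLp v 2 (haarAddCircle (T := 2 * Real.pi))) (F : Finset ℤ) :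
    ∑ k ∈ F, ‖fourierCoeff v k‖ ^ 2 ≤ ∫ t : Circ, ‖v t‖ ^ 2 ∂haarAddCircle :=
  sum_le_hasSum F (fun k _ => sq_nonneg _) (parseval hv)

lemma norm_fourier_apply {T : ℝ} (n : ℤ) (x : AddCircle T) : ‖fourier n x‖ = 1 := Circle.norm_coe _

lemma fc_poly (c : ℤ → ℂ) (S : Finset ℤ) (n : ℤ) :
    fourierCoeff (fun x : Circ => ∑ k ∈ S, c k * fourier k x) n
      = if n ∈ S then c n else 0 := by
  unfold fourierCoeff
  have : ∀ t : Circ, (fourier (-n)) t • ∑ k ∈ S, c k * fourier k t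
      = ∑ k ∈ S, c k * ((fourier (-n)) t • fourier k t) := by
    intro t
    rw [Finset.smul_sum]
    exact Finset.sum_congr rfl fun k _ => by simp only [smul_eq_mul]; ring
  simp only [this]
  rw [integral_finset_sum]
  · have : ∀ k ∈ S, (∫ t : Circ, c k * ((fourier (-n)) t • fourier k t) ∂haarAddCircle)
        = c k * (if n = k then 1 else 0) := by
      intro k _
      rw [show (fun t : Circ => c k * ((fourier (-n)) t • fourier k t))
          = fun t : Circ => c k • ((fourier (-n)) t • fourier k t) from funext fun t => rfl,
        integral_smul]
      rw [smul_eq_mul]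
      congr 1
      exact fc_fourier k n
    rw [Finset.sum_congr rfl this]
    simp only [mul_ite, mul_one, mul_zero]
    rw [Finset.sum_ite_eq S n c]
  · intro k _
    have hcont : Continuous fun t : Circ => (fourier (-n)) t • fourier k t :=
      (map_continuous (fourier (-n))).smul (map_continuous (fourier k))
    exact (contInt hcont).const_mul _

lemma fc_tsum (d : ℤ → ℂ) (hd : Summable fun j => ‖d j‖) (k : ℤ) :
    fourierCoeff (fun x : Circ => ∑' j : ℤ, d j * fourier j x) k = d k := by
  unfold fourierCoeff
  have hnn : Summable fun j => ‖d j‖₊ := by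
    rwa [← NNReal.summable_coe]
  have hswap : (∫ t : Circ, (fourier (-k)) t • ∑' j : ℤ, d j * fourier j t ∂haarAddCircle)
      = ∑' j : ℤ, ∫ t : Circ, (fourier (-k)) t • (d j * fourier j t) ∂haarAddCircle := by
    have h1 : ∀ t : Circ, (fourier (-k)) t • ∑' j : ℤ, d j * fourier j t
        = ∑' j : ℤ, (fourier (-k)) t • (d j * fourier j t) := by
      intro t
      simp only [smul_eq_mul]
      rw [← tsum_mul_left]
    simp only [h1]
    rw [integral_tsum]
    · intro j
      exact (((map_continuous (fourier (-k))).smul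
        (continuous_const.mul (map_continuous (fourier j))))).aestronglyMeasurable
    · have hpt : ∀ j : ℤ, (∫⁻ t : Circ, ‖(fourier (-k)) t • (d j * fourier j t)‖₊ ∂haarAddCircle)
          = (‖d j‖₊ : ℝ≥0∞) := by
        intro j
        have : ∀ t : Circ, (‖(fourier (-k)) t • (d j * fourier j t)‖₊ : ℝ≥0∞) = (‖d j‖₊ : ℝ≥0∞) := by
          intro t
          congr 1
          have : ‖(fourier (-k)) t • (d j * fourier j t)‖ = ‖d j‖ := by
            rw [norm_smul, norm_mul, norm_fourier_apply, norm_fourier_apply]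
            ring
          simpa [nnnorm, ← NNReal.coe_inj] using this
        simp only [this]
        simp [lintegral_const]
      simp only [enorm_eq_nnnorm]
      rw [tsum_congr hpt]
      exact ENNReal.tsum_coe_ne_top_iff_summable.mpr hnn
  rw [hswap]
  have hterm : ∀ j : ℤ, (∫ t : Circ, (fourier (-k)) t • (d j * fourier j t) ∂haarAddCircle)
      = d j * (if k = j then 1 else 0) := by
    intro j
    have : ∀ t : Circ, (fourier (-k)) t • (d j * fourier j t)
        = d j • ((fourier (-k)) t • fourier j t) := by
      intro t; simp only [smul_eq_mul]; ring
    simp only [this]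
    rw [integral_smul, smul_eq_mul]
    congr 1
    exact fc_fourier j k
  rw [tsum_congr hterm]
  rw [tsum_eq_single k]
  · simp
  · intro j hj
    simp [Ne.symm hj]

lemma cont_of_smooth {u : Circ → ℂ} (hu : SmoothT u) : Continuous u := by
  have h : Continuous fun x : ℝ => u (x : Circ) := hu.continuous
  exact ((QuotientAddGroup.isQuotientMap_mk _).continuous_iff).mpr h

lemma coef_bound {a b : ℝ} (hab : a < b) {G : ℝ → ℂ} {M : ℝ}
    (hM : ∀ x ∈ Set.uIoc a b, ‖G x‖ ≤ M) (n : ℤ) :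
    ‖fourierCoeffOn hab G n‖ ≤ M := by
  have hba : (0:ℝ) < b - a := sub_pos.mpr hab
  rw [fourierCoeffOn_eq_integral]
  have h1 : ‖(1 / (b - a) : ℝ)‖ = 1 / (b - a) := by
    rw [Real.norm_eq_abs, abs_of_pos (one_div_pos.mpr hba)]
  rw [norm_smul, h1]
  have h2 : ‖∫ x in a..b, (fourier (-n)) (x : AddCircle (b - a)) • G x‖ ≤ M * |b - a| := by
    apply intervalIntegral.norm_integral_le_of_norm_le_const
    intro x hx
    rw [norm_smul, norm_fourier_apply, one_mul]
    exact hM x hx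
  calc 1 / (b - a) * ‖∫ x in a..b, (fourier (-n)) (x : AddCircle (b - a)) • G x‖
      ≤ 1 / (b - a) * (M * |b - a|) :=
        mul_le_mul_of_nonneg_left h2 (le_of_lt (one_div_pos.mpr hba))
    _ = M := by
        rw [abs_of_pos hba]
        field_simp

lemma coef_step {a b : ℝ} (hab : a < b) {F : ℝ → ℂ} (hF : ContDiff ℝ (⊤:ℕ∞) F) (hper : F b = F a)
    {n : ℤ} (hn : n ≠ 0) :
    ‖fourierCoeffOn hab F n‖ = (b - a) / (2*π*|(n:ℝ)|) * ‖fourierCoeffOn hab (deriv F) n‖ := by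
  rw [fourierCoeffOn_of_hasDerivAt hab hn
      (fun x _ => (hF.differentiable (by simp) x).hasDerivAt)
      ((hF.continuous_deriv (by exact_mod_cast le_top)).intervalIntegrable _ _)]
  rw [hper, sub_self, mul_zero, zero_sub, norm_mul, norm_neg, norm_mul]
  have h1 : ‖(1 / (-2 * ↑π * I * (n:ℂ)) : ℂ)‖ = 1 / (2 * π * |(n:ℝ)|) := by
    rw [norm_div, norm_one]
    congr 1
    rw [show (-2 * (π:ℂ) * I * (n:ℂ)) = ((2*π:ℝ):ℂ) * ((-1:ℂ) * I) * ((n:ℝ):ℂ) from by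
      push_cast; ring]
    simp only [norm_mul, Complex.norm_real, Complex.norm_I, norm_neg, norm_one, one_mul,
      Real.norm_eq_abs, mul_one]
    rw [_root_.abs_of_nonneg (by norm_num : (0:ℝ) ≤ 2),
      _root_.abs_of_nonneg Real.pi_pos.le]
  rw [h1]
  have h2 : ‖((b:ℂ) - (a:ℂ))‖ = b - a := by
    rw [show ((b:ℂ) - (a:ℂ)) = ((b - a : ℝ) : ℂ) from by push_cast; ring,
      Complex.norm_real, Real.norm_eq_abs, abs_of_pos (sub_pos.mpr hab)]
  rw [h2]
  ring

lemma periodic_deriv {f : ℝ → ℂ} {c : ℝ} (h : Function.Periodic f c) :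
    Function.Periodic (deriv f) c := by
  intro x
  have hf : (fun y => f (y + c)) = f := funext h
  calc deriv f (x + c) = deriv (fun y => f (y + c)) x := (deriv_comp_add_const f c x).symm
    _ = deriv f x := by rw [hf]

lemma decay {u : Circ → ℂ} (hu : SmoothT u) :
    ∃ C : ℝ, 0 ≤ C ∧ ∀ n : ℤ, n ≠ 0 → ‖fourierCoeff u n‖ ≤ C * |(n:ℝ)| ^ (-3 : ℝ) := by
  set F : ℝ → ℂ := fun x => u (x : Circ) with hF
  have hFc : ContDiff ℝ (⊤:ℕ∞) F := hu.of_le (by simp)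
  have hper : Function.Periodic F (2*π) := fun x => by
    simp only [hF]
    rw [AddCircle.coe_add_period]
  have hF1c : ContDiff ℝ (⊤:ℕ∞) (deriv F) := (contDiff_infty_iff_deriv.mp hFc).2
  have hF2c : ContDiff ℝ (⊤:ℕ∞) (deriv (deriv F)) := (contDiff_infty_iff_deriv.mp hF1c).2
  have hF3c : ContDiff ℝ (⊤:ℕ∞) (deriv (deriv (deriv F))) := (contDiff_infty_iff_deriv.mp hF2c).2
  have hper1 : Function.Periodic (deriv F) (2*π) := periodic_deriv hper
  have hper2 : Function.Periodic (deriv (deriv F)) (2*π) := periodic_deriv hper1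
  -- bound for third derivative on [0, 0 + 2π]
  obtain ⟨M, hM⟩ := (isCompact_Icc (a := (0:ℝ)) (b := 0 + 2*π)).exists_bound_of_continuousOn
    (hF3c.continuous.continuousOn (s := Set.Icc 0 (0 + 2*π)))
  have hM0 : 0 ≤ M := le_trans (norm_nonneg _) (hM 0 (Set.mem_Icc.mpr ⟨le_refl 0, by positivity⟩))
  have h02 : (0:ℝ) < 0 + 2*π := by positivity
  have hMu : ∀ x ∈ Set.uIoc (0:ℝ) (0 + 2*π), ‖deriv (deriv (deriv F)) x‖ ≤ M := by
    intro x hx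
    apply hM
    rw [Set.uIoc_of_le (le_of_lt h02)] at hx
    exact ⟨le_of_lt hx.1, hx.2⟩
  refine ⟨M, hM0, fun n hn => ?_⟩
  have hlift : AddCircle.liftIoc (2*π) 0 F = u := by
    funext q
    set y := AddCircle.equivIoc (2*π) 0 q with hy
    have hA : (((y : ℝ) : Circ)) = q := (AddCircle.equivIoc (2*π) 0).symm_apply_apply q
    have hB : AddCircle.liftIoc (2*π) 0 F (((y : ℝ) : Circ)) = F (y : ℝ) :=
      AddCircle.liftIoc_coe_apply y.2
    rw [← hA, hB]
  have e1 : fourierCoeff u n = fourierCoeffOn h02 F n := by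
    conv_lhs => rw [← hlift]
    exact fourierCoeff_liftIoc_eq F n
  have hb : (0:ℝ) + 2*π - 0 = 2*π := by ring
  have per0 : F (0 + 2*π) = F 0 := hper 0
  have per1 : deriv F (0 + 2*π) = deriv F 0 := hper1 0
  have per2 : deriv (deriv F) (0 + 2*π) = deriv (deriv F) 0 := hper2 0
  have s1 := coef_step h02 hFc per0 hn
  have s2 := coef_step h02 hF1c per1 hn
  have s3 := coef_step h02 hF2c per2 hn
  have hbound := coef_bound h02 hMu n
  have hn0 : (0:ℝ) < |(n:ℝ)| := by
    rw [abs_pos]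
    exact_mod_cast hn
  have hfac : (0 + 2*π - 0) / (2*π*|(n:ℝ)|) = 1 / |(n:ℝ)| := by
    rw [hb]
    rw [div_eq_div_iff (by positivity) (by positivity)]
    ring
  rw [hfac] at s1 s2 s3
  rw [e1, s1, s2, s3]
  have : |(n:ℝ)| ^ (-3:ℝ) = (1/|(n:ℝ)|) * ((1/|(n:ℝ)|) * (1/|(n:ℝ)|)) := by
    rw [show (-3:ℝ) = (-1) + ((-1) + (-1)) from by norm_num]
    rw [Real.rpow_add hn0, Real.rpow_add hn0, Real.rpow_neg_one]
    field_simp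
  rw [this]
  have h1n : 0 ≤ 1/|(n:ℝ)| := by positivity
  calc 1/|(n:ℝ)| * (1/|(n:ℝ)| * (1/|(n:ℝ)| * ‖fourierCoeffOn h02 (deriv (deriv (deriv F))) n‖))
      ≤ 1/|(n:ℝ)| * (1/|(n:ℝ)| * (1/|(n:ℝ)| * M)) := by
        apply mul_le_mul_of_nonneg_left (mul_le_mul_of_nonneg_left
          (mul_le_mul_of_nonneg_left hbound h1n) h1n) h1n
    _ = M * (1/|(n:ℝ)| * (1/|(n:ℝ)| * (1/|(n:ℝ)|))) := by ring

lemma summable_d {α h : ℝ} (hα : 0 < α) (hα2 : α < 2) (hh : 0 < h) {u : Circ → ℂ}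
    (hu : SmoothT u) :
    Summable fun j : ℤ => ‖((|h * (j : ℝ)| ^ α : ℝ) : ℂ) * fourierCoeff u j‖ := by
  obtain ⟨C, hC0, hC⟩ := decay hu
  have hsum : Summable fun j : ℤ => C * h ^ α * |(j:ℝ)| ^ (α - 3) := by
    apply Summable.mul_left
    have h31 : (1:ℝ) < 3 - α := by linarith
    have := Real.summable_abs_int_rpow h31
    simpa [neg_sub] using this
  apply Summable.of_nonneg_of_le (fun j => norm_nonneg _) _ hsum
  intro j
  rcases eq_or_ne j 0 with rfl | hj
  · simp only [Int.cast_zero, mul_zero, abs_zero]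
    rw [Real.zero_rpow (ne_of_gt hα)]
    simp only [Complex.ofReal_zero, zero_mul, norm_zero]
    positivity
  · have hj0 : (0:ℝ) < |(j:ℝ)| := by
      rw [abs_pos]; exact_mod_cast hj
    rw [norm_mul, Complex.norm_real, Real.norm_eq_abs]
    have h1 : |(|h * (j:ℝ)| ^ α)| = (h * |(j:ℝ)|) ^ α := by
      rw [_root_.abs_of_nonneg (Real.rpow_nonneg (abs_nonneg _) α), abs_mul, _root_.abs_of_pos hh]
    rw [h1]
    have h2 : (h * |(j:ℝ)|) ^ α = h ^ α * |(j:ℝ)| ^ α :=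
      Real.mul_rpow hh.le (abs_nonneg _)
    rw [h2]
    calc h ^ α * |(j:ℝ)| ^ α * ‖fourierCoeff u j‖
        ≤ h ^ α * |(j:ℝ)| ^ α * (C * |(j:ℝ)| ^ (-3:ℝ)) := by
          apply mul_le_mul_of_nonneg_left (hC j hj)
          positivity
      _ = C * h ^ α * |(j:ℝ)| ^ (α - 3) := by
          rw [show α - 3 = α + (-3) from by ring, Real.rpow_add hj0]
          ring

lemma fracDh_eq {α h : ℝ} (hα : 0 < α) (hα2 : α < 2) (hh : 0 < h) {u : Circ → ℂ}
    (hu : SmoothT u) :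
    fracDh α h u = fun x => ∑' j : ℤ, (((|h * (j : ℝ)| ^ α : ℝ) : ℂ) * fourierCoeff u j)
      * fourier j x := rfl

lemma cont_fracDh {α h : ℝ} (hα : 0 < α) (hα2 : α < 2) (hh : 0 < h) {u : Circ → ℂ}
    (hu : SmoothT u) : Continuous (fracDh α h u) := by
  rw [fracDh_eq hα hα2 hh hu]
  apply continuous_tsum
  · intro j
    exact continuous_const.mul (map_continuous (fourier j))
  · exact summable_d hα hα2 hh hu
  · intro j x
    rw [norm_mul, norm_fourier_apply, mul_one]

lemma fc_fracDh {α h : ℝ} (hα : 0 < α) (hα2 : α < 2) (hh : 0 < h) {u : Circ → ℂ}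
    (hu : SmoothT u) (k : ℤ) :
    fourierCoeff (fracDh α h u) k = ((|h * (k : ℝ)| ^ α : ℝ) : ℂ) * fourierCoeff u k := by
  rw [fracDh_eq hα hα2 hh hu]
  exact fc_tsum _ (summable_d hα hα2 hh hu) k

lemma fc_sub {f g : Circ → ℂ} (hf : Integrable f (haarAddCircle (T := 2 * Real.pi)))
    (hg : Integrable g (haarAddCircle (T := 2 * Real.pi))) (n : ℤ) :
    fourierCoeff (fun x => f x - g x) n = fourierCoeff f n - fourierCoeff g n := by
  unfold fourierCoeff
  have hfi : Integrable (fun t : Circ => (fourier (-n)) t • f t) haarAddCircle := by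
    simp only [smul_eq_mul]
    exact hf.bdd_mul (map_continuous (fourier (-n))).aestronglyMeasurable
      (Filter.Eventually.of_forall fun x => le_of_eq (norm_fourier_apply _ _))
  have hgi : Integrable (fun t : Circ => (fourier (-n)) t • g t) haarAddCircle := by
    simp only [smul_eq_mul]
    exact hg.bdd_mul (map_continuous (fourier (-n))).aestronglyMeasurable
      (Filter.Eventually.of_forall fun x => le_of_eq (norm_fourier_apply _ _))
  calc (∫ t : Circ, (fourier (-n)) t • (f t - g t) ∂haarAddCircle)
      = ∫ t : Circ, ((fourier (-n)) t • f t - (fourier (-n)) t • g t) ∂haarAddCircle := by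
        congr 1; funext t; rw [smul_sub]
    _ = _ := integral_sub hfi hgi

lemma chiu_bound {χ : Circ → ℝ} {u : Circ → ℂ} (hχm : Measurable χ)
    (hu : Continuous u) {Mχ Mu : ℝ} (hMχ : ∀ x, |χ x| ≤ Mχ) (hMu : ∀ x, ‖u x‖ ≤ Mu) :
    AEStronglyMeasurable (fun x => (χ x : ℂ) * u x) (haarAddCircle (T := 2 * Real.pi))
      ∧ ∀ x, ‖(χ x : ℂ) * u x‖ ≤ Mχ * Mu := by
  constructor
  · exact ((Complex.continuous_ofReal.measurable.comp hχm).mul hu.measurable).aestronglyMeasurable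
  · intro x
    rw [norm_mul, Complex.norm_real, Real.norm_eq_abs]
    exact mul_le_mul (hMχ x) (hMu x) (norm_nonneg _) (le_trans (abs_nonneg _) (hMχ x))

lemma fc_Pop {α h z : ℝ} (hα : 0 < α) (hα2 : α < 2) (hh : 0 < h) {χ : Circ → ℝ}
    (hχm : Measurable χ) {Mχ : ℝ} (hMχ : ∀ x, |χ x| ≤ Mχ) {u : Circ → ℂ} (hu : SmoothT u)
    (k : ℤ) :
    fourierCoeff (Pop α h z χ u) k = fourierCoeff (fracDh α h u) k
      - Complex.I * (z:ℂ) * ((h ^ (α/2) : ℝ) : ℂ) * fourierCoeff (fun x => (χ x : ℂ) * u x) k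
      - ((z^2 : ℝ) : ℂ) * fourierCoeff u k := by
  have hcu : Continuous u := cont_of_smooth hu
  obtain ⟨Mu, hMu⟩ := isCompact_univ.exists_bound_of_continuousOn hcu.continuousOn
  have hMu' : ∀ x, ‖u x‖ ≤ Mu := fun x => hMu x (Set.mem_univ x)
  obtain ⟨hmeas, hbd⟩ := chiu_bound hχm hcu hMχ hMu'
  have hint1 : Integrable (fracDh α h u) (haarAddCircle (T := 2 * Real.pi)) :=
    contInt (cont_fracDh hα hα2 hh hu)
  have hint2 : Integrable (fun x => (χ x : ℂ) * u x) (haarAddCircle (T := 2 * Real.pi)) :=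
    bddInt hmeas hbd
  have hint2' : Integrable
      (fun x => (Complex.I * (z:ℂ) * ((h ^ (α/2) : ℝ) : ℂ)) * ((χ x : ℂ) * u x))
      (haarAddCircle (T := 2 * Real.pi)) := hint2.const_mul _
  have hint3 : Integrable (fun x => ((z^2 : ℝ) : ℂ) * u x)
      (haarAddCircle (T := 2 * Real.pi)) := (contInt hcu).const_mul _
  have e2 := fc_sub (f := fracDh α h u)
    (g := fun x => (Complex.I * (z:ℂ) * ((h ^ (α/2) : ℝ) : ℂ)) * ((χ x : ℂ) * u x))
    hint1 hint2' k
  have e1 := fc_sub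
    (f := fun x => fracDh α h u x
      - (Complex.I * (z:ℂ) * ((h ^ (α/2) : ℝ) : ℂ)) * ((χ x : ℂ) * u x))
    (g := fun x => ((z^2 : ℝ) : ℂ) * u x)
    (hint1.sub hint2') hint3 k
  have hPop : Pop α h z χ u = fun x =>
      (fracDh α h u x
        - (Complex.I * (z:ℂ) * ((h ^ (α/2) : ℝ) : ℂ)) * ((χ x : ℂ) * u x))
      - ((z^2 : ℝ) : ℂ) * u x := by
    funext x
    simp only [Pop]
    ring
  rw [hPop, e1, e2,
    fourierCoeff.const_mul (fun x => (χ x : ℂ) * u x) _ k,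
    fourierCoeff.const_mul u _ k]

lemma L2sq_nonneg (v : Circ → ℂ) : 0 ≤ L2sq v :=
  integral_nonneg fun x => by positivity

lemma L2norm_eq_sqrt (v : Circ → ℂ) : L2norm v = Real.sqrt (L2sq v) := by
  rw [L2norm, Real.sqrt_eq_rpow]

lemma L2sq_eq_haar (v : Circ → ℂ) :
    L2sq v = (2*π) * ∫ t : Circ, ‖v t‖ ^ 2 ∂haarAddCircle := by
  rw [L2sq, AddCircle.volume_eq_smul_haarAddCircle, integral_smul_measure, smul_eq_mul,
    ENNReal.toReal_ofReal (by positivity)]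

lemma L2sq_poly (c : ℤ → ℂ) (S : Finset ℤ) :
    L2sq (fun x => ∑ k ∈ S, c k * fourier k x) = (2*π) * ∑ k ∈ S, ‖c k‖ ^ 2 := by
  rw [L2sq_eq_haar]
  congr 1
  have hc : Continuous (fun x : Circ => ∑ k ∈ S, c k * fourier k x) :=
    continuous_finset_sum _ fun k _ => continuous_const.mul (map_continuous (fourier k))
  have hp := (parseval (contMem hc)).tsum_eq
  rw [← hp]
  have hfc : ∀ n : ℤ, ‖fourierCoeff (fun x : Circ => ∑ k ∈ S, c k * fourier k x) n‖ ^ 2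
      = if n ∈ S then ‖c n‖ ^ 2 else 0 := by
    intro n
    rw [fc_poly]
    split_ifs <;> simp
  rw [tsum_congr hfc, tsum_eq_sum (s := S) (fun b hb => if_neg hb)]
  exact Finset.sum_congr rfl fun k hk => if_pos hk

lemma multG_eq_sum (G₀ : ℝ → ℝ) (h : ℝ) (v : Circ → ℂ) (S : Finset ℤ)
    (hS : ∀ k ∉ S, G₀ (h * (k:ℝ)) = 0) :
    MultG G₀ h v
      = fun x => ∑ k ∈ S, (((G₀ (h * (k:ℝ)) : ℝ) : ℂ) * fourierCoeff v k) * fourier k x := by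
  funext x
  rw [MultG, Mult]
  rw [tsum_eq_sum (s := S) (fun k hk => by rw [hS k hk]; simp)]

lemma key_bound {S : Finset ℤ} (w : EuclideanSpace ℂ S) {v : Circ → ℂ}
    (hv : MemLp v 2 (haarAddCircle (T := 2*Real.pi))) {K : ℝ} (hK : 0 ≤ K)
    (hw : ∀ k : S, ‖w k‖ ≤ K * ‖fourierCoeff v (k:ℤ)‖) :
    Real.sqrt (2*π) * ‖w‖ ≤ K * L2norm v := by
  have hπ : (0:ℝ) < 2*π := by positivity
  have h1 : ‖w‖ ^ 2 ≤ K ^ 2 * ∑ k ∈ S, ‖fourierCoeff v k‖ ^ 2 := by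
    rw [EuclideanSpace.norm_eq, Real.sq_sqrt (Finset.sum_nonneg fun i _ => sq_nonneg _)]
    rw [← Finset.sum_coe_sort S (fun k => ‖fourierCoeff v k‖ ^ 2), Finset.mul_sum]
    apply Finset.sum_le_sum
    intro i _
    calc ‖w i‖ ^ 2 ≤ (K * ‖fourierCoeff v (i:ℤ)‖) ^ 2 := by
          apply pow_le_pow_left₀ (norm_nonneg _) (hw i)
      _ = K ^ 2 * ‖fourierCoeff v (i:ℤ)‖ ^ 2 := by ring
  have h2 : ∑ k ∈ S, ‖fourierCoeff v k‖ ^ 2 ≤ L2sq v / (2*π) := by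
    rw [L2sq_eq_haar, mul_comm (2*π), mul_div_assoc, div_self (ne_of_gt hπ), mul_one]
    exact bessel hv S
  have h3 : (Real.sqrt (2*π) * ‖w‖) ^ 2 ≤ (K * L2norm v) ^ 2 := by
    rw [mul_pow, Real.sq_sqrt hπ.le, mul_pow, L2norm_eq_sqrt,
      Real.sq_sqrt (L2sq_nonneg v)]
    calc 2*π * ‖w‖ ^ 2 ≤ 2*π * (K ^ 2 * (L2sq v / (2*π))) := by
          apply mul_le_mul_of_nonneg_left _ hπ.le
          exact le_trans h1 (mul_le_mul_of_nonneg_left h2 (sq_nonneg K))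
      _ = K ^ 2 * L2sq v := by field_simp
  have h4 : 0 ≤ K * L2norm v := by
    apply mul_nonneg hK
    rw [L2norm_eq_sqrt]
    exact Real.sqrt_nonneg _
  nlinarith [mul_nonneg (Real.sqrt_nonneg (2*π)) (norm_nonneg w)]

set_option maxHeartbeats 2000000 in
/-- Lemma 3.2, first part (circle case): low-frequency elliptic estimate. -/
theorem low_frequency_elliptic_estimate
    (α : ℝ) (hα : 0 < α) (hα2 : α < 2)
    (χ : Circ → ℝ) (hχ : ∀ x, 0 ≤ χ x) (hχm : Measurable χ)
    (hχb : ∃ M : ℝ, ∀ x, χ x ≤ M)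
    (G₀ : ℝ → ℝ) (hG₀ : ContDiff ℝ (⊤ : ℕ∞) G₀) (hG₀r : ∀ ξ, G₀ ξ ∈ Set.Icc (0:ℝ) 1)
    (hG₀s : ∀ ξ : ℝ, 1/4 < |ξ| → G₀ ξ = 0) :
    ∀ z : ℝ, z ≠ 0 → ∀ h : ℝ, 0 < h → ∀ u : Circ → ℂ, SmoothT u →
      L2norm (MultG G₀ h u) ≤
        (1 / ((4:ℝ) ^ α * z ^ 2)) * L2norm u
        + (1 / z ^ 2) * L2norm (Pop α h z χ u)
        + (h ^ (α / 2) / |z|) * (⨆ x : Circ, Real.sqrt (χ x)) *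
            L2norm (fun x => (Real.sqrt (χ x) : ℂ) * u x) := by
  intro z hz h hh u hu
  have hπ : (0:ℝ) < 2*π := by positivity
  obtain ⟨Mχ, hMχ⟩ := hχb
  have hMχ' : ∀ x, |χ x| ≤ Mχ := fun x => by
    rw [_root_.abs_of_nonneg (hχ x)]; exact hMχ x
  have hcu : Continuous u := cont_of_smooth hu
  obtain ⟨Mu, hMu0⟩ := isCompact_univ.exists_bound_of_continuousOn hcu.continuousOn
  have hMu : ∀ x, ‖u x‖ ≤ Mu := fun x => hMu0 x (Set.mem_univ x)
  -- the finite frequency window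
  set N : ℕ := ⌈1/(4*h)⌉₊ with hN
  set S : Finset ℤ := Finset.Icc (-(N:ℤ)) (N:ℤ) with hSdef
  have hS : ∀ k ∉ S, G₀ (h * (k:ℝ)) = 0 := by
    intro k hk
    apply hG₀s
    have hNk : (N:ℤ) < |k| := by
      by_contra hcon
      push_neg at hcon
      apply hk
      rw [hSdef, Finset.mem_Icc]
      constructor
      · linarith [neg_abs_le k]
      · linarith [le_abs_self k]
    have hNk' : (N:ℝ) < |(k:ℝ)| := by exact_mod_cast hNk
    have h14 : 1/(4*h) ≤ (N:ℝ) := Nat.le_ceil _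
    rw [abs_mul, _root_.abs_of_pos hh]
    calc (1:ℝ)/4 = h * (1/(4*h)) := by field_simp
      _ ≤ h * N := mul_le_mul_of_nonneg_left h14 hh.le
      _ < h * |(k:ℝ)| := (mul_lt_mul_iff_right₀ hh).mpr hNk'
  -- membership in L²
  have hmu : MemLp u 2 (haarAddCircle (T := 2*Real.pi)) := contMem hcu
  obtain ⟨hχum, hχub⟩ := chiu_bound hχm hcu hMχ' hMu
  have hmχu : MemLp (fun x => (χ x : ℂ) * u x) 2 (haarAddCircle (T := 2*Real.pi)) :=
    bddMem hχum hχub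
  have hcf : Continuous (fracDh α h u) := cont_fracDh hα hα2 hh hu
  obtain ⟨Mf, hMf0⟩ := isCompact_univ.exists_bound_of_continuousOn hcf.continuousOn
  have hMf : ∀ x, ‖fracDh α h u x‖ ≤ Mf := fun x => hMf0 x (Set.mem_univ x)
  have hmPmeas : AEStronglyMeasurable (Pop α h z χ u) (haarAddCircle (T := 2*Real.pi)) := by
    have : Measurable fun x : Circ => fracDh α h u x
        - Complex.I * (z:ℂ) * ((h ^ (α/2) : ℝ):ℂ) * (χ x : ℂ) * u x
        - ((z^2:ℝ):ℂ) * u x := by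
      apply Measurable.sub
      · apply Measurable.sub
        · exact hcf.measurable
        · exact (measurable_const.mul
            (Complex.continuous_ofReal.measurable.comp hχm)).mul hcu.measurable
      · exact measurable_const.mul hcu.measurable
    exact this.aestronglyMeasurable
  have hmP : MemLp (Pop α h z χ u) 2 (haarAddCircle (T := 2*Real.pi)) := by
    apply bddMem hmPmeas (M := Mf + |z| * h^(α/2) * (Mχ * Mu) + z^2 * Mu)
    intro x
    have e1 : ‖Complex.I * (z:ℂ) * ((h^(α/2) : ℝ):ℂ) * (χ x : ℂ) * u x‖
        ≤ |z| * h^(α/2) * (Mχ * Mu) := by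
      rw [show Complex.I * (z:ℂ) * ((h^(α/2) : ℝ):ℂ) * (χ x : ℂ) * u x
          = (Complex.I * (z:ℂ) * ((h^(α/2) : ℝ):ℂ)) * ((χ x : ℂ) * u x) from by ring]
      rw [norm_mul]
      have : ‖Complex.I * (z:ℂ) * ((h^(α/2) : ℝ):ℂ)‖ = |z| * h^(α/2) := by
        simp only [norm_mul, Complex.norm_I, one_mul, Complex.norm_real, Real.norm_eq_abs]
        rw [_root_.abs_of_nonneg (Real.rpow_nonneg hh.le _)]
      rw [this]
      exact mul_le_mul_of_nonneg_left (hχub x) (by positivity)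
    have e2 : ‖((z^2 : ℝ):ℂ) * u x‖ ≤ z^2 * Mu := by
      rw [norm_mul, Complex.norm_real, Real.norm_eq_abs, _root_.abs_of_nonneg (sq_nonneg z)]
      exact mul_le_mul_of_nonneg_left (hMu x) (sq_nonneg z)
    calc ‖Pop α h z χ u x‖
        ≤ ‖fracDh α h u x - Complex.I * (z:ℂ) * ((h^(α/2) : ℝ):ℂ) * (χ x : ℂ) * u x‖
          + ‖((z^2 : ℝ):ℂ) * u x‖ := norm_sub_le _ _
      _ ≤ (‖fracDh α h u x‖
          + ‖Complex.I * (z:ℂ) * ((h^(α/2) : ℝ):ℂ) * (χ x : ℂ) * u x‖)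
          + ‖((z^2 : ℝ):ℂ) * u x‖ := by
            apply add_le_add_left (norm_sub_le _ _)
      _ ≤ Mf + |z| * h^(α/2) * (Mχ * Mu) + z^2 * Mu := by
            apply add_le_add (add_le_add (hMf x) e1) e2
  -- the coefficient vectors
  set vu : EuclideanSpace ℂ S := WithLp.toLp 2
    (fun k : S => ((G₀ (h * ((k:ℤ):ℝ)) : ℝ) : ℂ) * fourierCoeff u (k:ℤ)) with hvu
  set vf : EuclideanSpace ℂ S := WithLp.toLp 2
    (fun k : S => ((G₀ (h * ((k:ℤ):ℝ)) : ℝ) : ℂ) * fourierCoeff (fracDh α h u) (k:ℤ)) with hvf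
  set vP : EuclideanSpace ℂ S := WithLp.toLp 2
    (fun k : S => ((G₀ (h * ((k:ℤ):ℝ)) : ℝ) : ℂ) * fourierCoeff (Pop α h z χ u) (k:ℤ)) with hvP
  set vχ : EuclideanSpace ℂ S := WithLp.toLp 2
    (fun k : S => ((G₀ (h * ((k:ℤ):ℝ)) : ℝ) : ℂ)
      * fourierCoeff (fun x => (χ x : ℂ) * u x) (k:ℤ)) with hvχ
  have hzC : ((z:ℂ)) ≠ 0 := Complex.ofReal_ne_zero.mpr hz
  have hid : vu = ((z:ℂ)^2)⁻¹ • vf - ((z:ℂ)^2)⁻¹ • vP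
      - ((Complex.I * ((h ^ (α/2) : ℝ) : ℂ)) / (z:ℂ)) • vχ := by
    ext k
    simp only [hvu, hvf, hvP, hvχ, PiLp.toLp_apply, PiLp.sub_apply, PiLp.smul_apply, smul_eq_mul]
    rw [fc_Pop hα hα2 hh hχm hMχ' hu (k:ℤ)]
    have : ((z^2 : ℝ) : ℂ) = (z:ℂ)^2 := by push_cast; ring
    rw [this]
    field_simp
    ring
  have htri : ‖vu‖ ≤ (1/z^2) * ‖vf‖ + (1/z^2) * ‖vP‖ + (h^(α/2)/|z|) * ‖vχ‖ := by
    rw [hid]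
    have hnz2 : ‖((z:ℂ)^2)⁻¹‖ = 1/z^2 := by
      rw [norm_inv, norm_pow, Complex.norm_real, Real.norm_eq_abs, _root_.sq_abs, one_div]
    have hnc : ‖(Complex.I * ((h ^ (α/2) : ℝ) : ℂ)) / (z:ℂ)‖ = h^(α/2)/|z| := by
      rw [norm_div, norm_mul, Complex.norm_I, one_mul, Complex.norm_real, Real.norm_eq_abs,
        Complex.norm_real, Real.norm_eq_abs, _root_.abs_of_nonneg (Real.rpow_nonneg hh.le _)]
    calc ‖((z:ℂ)^2)⁻¹ • vf - ((z:ℂ)^2)⁻¹ • vP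
        - ((Complex.I * ((h ^ (α/2) : ℝ) : ℂ)) / (z:ℂ)) • vχ‖
        ≤ ‖((z:ℂ)^2)⁻¹ • vf - ((z:ℂ)^2)⁻¹ • vP‖
          + ‖((Complex.I * ((h ^ (α/2) : ℝ) : ℂ)) / (z:ℂ)) • vχ‖ := norm_sub_le _ _
      _ ≤ (‖((z:ℂ)^2)⁻¹ • vf‖ + ‖((z:ℂ)^2)⁻¹ • vP‖)
          + ‖((Complex.I * ((h ^ (α/2) : ℝ) : ℂ)) / (z:ℂ)) • vχ‖ :=
            add_le_add_left (norm_sub_le _ _) _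
      _ = (1/z^2) * ‖vf‖ + (1/z^2) * ‖vP‖ + (h^(α/2)/|z|) * ‖vχ‖ := by
            rw [norm_smul, norm_smul, norm_smul, hnz2, hnc]
  -- L2 norm of the localized function as a Euclidean norm
  have hLeq : L2norm (MultG G₀ h u) = Real.sqrt (2*π) * ‖vu‖ := by
    rw [multG_eq_sum G₀ h u S hS, L2norm_eq_sqrt, L2sq_poly, EuclideanSpace.norm_eq,
      ← Real.sqrt_mul hπ.le]
    congr 2
    simp only [hvu, PiLp.toLp_apply]
    exact (Finset.sum_coe_sort S
      (fun k => ‖((G₀ (h * (k:ℝ)) : ℝ) : ℂ) * fourierCoeff u k‖ ^ 2)).symm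
  -- bounds on the three pieces
  have hK1 : (0:ℝ) ≤ ((4:ℝ) ^ α)⁻¹ := by positivity
  have b1 : Real.sqrt (2*π) * ‖vf‖ ≤ ((4:ℝ) ^ α)⁻¹ * L2norm u := by
    apply key_bound vf hmu hK1
    intro k
    have : vf k = ((G₀ (h * ((k:ℤ):ℝ)) : ℝ) : ℂ)
        * (((|h * ((k:ℤ):ℝ)| ^ α : ℝ) : ℂ) * fourierCoeff u (k:ℤ)) := by
      simp only [hvf, PiLp.toLp_apply]
      rw [fc_fracDh hα hα2 hh hu (k:ℤ)]
    rw [this]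
    by_cases hg : G₀ (h * ((k:ℤ):ℝ)) = 0
    · rw [hg]
      simp only [Complex.ofReal_zero, zero_mul, norm_zero]
      positivity
    · have hle : |h * ((k:ℤ):ℝ)| ≤ 1/4 := by
        by_contra hgt
        push_neg at hgt
        exact hg (hG₀s _ hgt)
      have hd : |h * ((k:ℤ):ℝ)| ^ α ≤ ((4:ℝ) ^ α)⁻¹ := by
        have h1 : |h * ((k:ℤ):ℝ)| ^ α ≤ ((4:ℝ)⁻¹) ^ α := by
          apply Real.rpow_le_rpow (abs_nonneg _) _ hα.le
          rw [← one_div]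
          exact hle
        rwa [Real.inv_rpow (by norm_num : (0:ℝ) ≤ 4)] at h1
      have hgle : |G₀ (h * ((k:ℤ):ℝ))| ≤ 1 :=
        abs_le.mpr ⟨by linarith [(hG₀r (h * ((k:ℤ):ℝ))).1], (hG₀r (h * ((k:ℤ):ℝ))).2⟩
      rw [norm_mul, norm_mul, Complex.norm_real, Complex.norm_real, Real.norm_eq_abs,
        Real.norm_eq_abs, _root_.abs_of_nonneg (Real.rpow_nonneg (abs_nonneg _) α)]
      calc |G₀ (h * ((k:ℤ):ℝ))| * (|h * ((k:ℤ):ℝ)| ^ α * ‖fourierCoeff u (k:ℤ)‖)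
          ≤ 1 * (((4:ℝ) ^ α)⁻¹ * ‖fourierCoeff u (k:ℤ)‖) := by
            apply mul_le_mul hgle _ (by positivity) zero_le_one
            exact mul_le_mul_of_nonneg_right hd (norm_nonneg _)
        _ = ((4:ℝ) ^ α)⁻¹ * ‖fourierCoeff u (k:ℤ)‖ := by ring
  have hgle1 : ∀ k : ℤ, ‖((G₀ (h * (k:ℝ)) : ℝ) : ℂ)‖ ≤ 1 := by
    intro k
    rw [Complex.norm_real, Real.norm_eq_abs]
    exact abs_le.mpr ⟨by linarith [(hG₀r (h * (k:ℝ))).1], (hG₀r (h * (k:ℝ))).2⟩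
  have b2 : Real.sqrt (2*π) * ‖vP‖ ≤ 1 * L2norm (Pop α h z χ u) := by
    apply key_bound vP hmP zero_le_one
    intro k
    simp only [hvP, PiLp.toLp_apply]
    rw [norm_mul]
    exact mul_le_mul_of_nonneg_right (hgle1 (k:ℤ)) (norm_nonneg _)
  have b3 : Real.sqrt (2*π) * ‖vχ‖ ≤ 1 * L2norm (fun x => (χ x : ℂ) * u x) := by
    apply key_bound vχ hmχu zero_le_one
    intro k
    simp only [hvχ, PiLp.toLp_apply]
    rw [norm_mul]
    exact mul_le_mul_of_nonneg_right (hgle1 (k:ℤ)) (norm_nonneg _)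
  -- comparison of the weighted norms
  have hsupnn : 0 ≤ ⨆ x : Circ, Real.sqrt (χ x) :=
    Real.iSup_nonneg fun x => Real.sqrt_nonneg _
  have hbdd : BddAbove (Set.range fun x : Circ => Real.sqrt (χ x)) := by
    refine ⟨Real.sqrt Mχ, ?_⟩
    rintro y ⟨x, rfl⟩
    exact Real.sqrt_le_sqrt (hMχ x)
  have hχsup : ∀ x, χ x ≤ (⨆ x : Circ, Real.sqrt (χ x)) ^ 2 := by
    intro x
    have h1 : Real.sqrt (χ x) ≤ ⨆ x : Circ, Real.sqrt (χ x) := le_ciSup hbdd x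
    calc χ x = (Real.sqrt (χ x)) ^ 2 := (Real.sq_sqrt (hχ x)).symm
      _ ≤ (⨆ x : Circ, Real.sqrt (χ x)) ^ 2 :=
          pow_le_pow_left₀ (Real.sqrt_nonneg _) h1 2
  have b4 : L2norm (fun x => (χ x : ℂ) * u x)
      ≤ (⨆ x : Circ, Real.sqrt (χ x)) * L2norm (fun x => (Real.sqrt (χ x) : ℂ) * u x) := by
    rw [L2norm_eq_sqrt, L2norm_eq_sqrt]
    have hm1 : Measurable fun x : Circ => ‖(χ x : ℂ) * u x‖ ^ 2 :=
      (((Complex.continuous_ofReal.measurable.comp hχm).mul hcu.measurable).norm).pow_const 2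
    have hm2 : Measurable fun x : Circ =>
        (⨆ x : Circ, Real.sqrt (χ x)) ^ 2 * ‖(Real.sqrt (χ x) : ℂ) * u x‖ ^ 2 :=
      measurable_const.mul ((((Complex.continuous_ofReal.measurable.comp
        (Real.continuous_sqrt.measurable.comp hχm)).mul hcu.measurable).norm).pow_const 2)
    have hb1 : ∀ x : Circ, ‖(‖(χ x : ℂ) * u x‖ ^ 2 : ℝ)‖ ≤ (Mχ * Mu) ^ 2 := by
      intro x
      rw [Real.norm_eq_abs, _root_.abs_of_nonneg (by positivity)]
      exact pow_le_pow_left₀ (norm_nonneg _) (hχub x) 2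
    have hb2 : ∀ x : Circ, ‖((⨆ x : Circ, Real.sqrt (χ x)) ^ 2
        * ‖(Real.sqrt (χ x) : ℂ) * u x‖ ^ 2 : ℝ)‖
        ≤ (⨆ x : Circ, Real.sqrt (χ x)) ^ 2 * (Real.sqrt Mχ * Mu) ^ 2 := by
      intro x
      rw [Real.norm_eq_abs, _root_.abs_of_nonneg (by positivity)]
      apply mul_le_mul_of_nonneg_left _ (by positivity)
      apply pow_le_pow_left₀ (norm_nonneg _)
      rw [norm_mul, Complex.norm_real, Real.norm_eq_abs,
        _root_.abs_of_nonneg (Real.sqrt_nonneg _)]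
      exact mul_le_mul (Real.sqrt_le_sqrt (hMχ x)) (hMu x) (norm_nonneg _)
        (Real.sqrt_nonneg _)
    have hint1 : Integrable (fun x : Circ => ‖(χ x : ℂ) * u x‖ ^ 2) volume :=
      memLp_one_iff_integrable.mp (MemLp.of_bound hm1.aestronglyMeasurable _
        (Filter.Eventually.of_forall hb1))
    have hint2 : Integrable (fun x : Circ => (⨆ x : Circ, Real.sqrt (χ x)) ^ 2
        * ‖(Real.sqrt (χ x) : ℂ) * u x‖ ^ 2) volume :=
      memLp_one_iff_integrable.mp (MemLp.of_bound hm2.aestronglyMeasurable _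
        (Filter.Eventually.of_forall hb2))
    have hpt : ∀ x : Circ, ‖(χ x : ℂ) * u x‖ ^ 2
        ≤ (⨆ x : Circ, Real.sqrt (χ x)) ^ 2 * ‖(Real.sqrt (χ x) : ℂ) * u x‖ ^ 2 := by
      intro x
      rw [norm_mul, norm_mul, Complex.norm_real, Complex.norm_real, Real.norm_eq_abs,
        Real.norm_eq_abs, _root_.abs_of_nonneg (hχ x),
        _root_.abs_of_nonneg (Real.sqrt_nonneg _), mul_pow, mul_pow, Real.sq_sqrt (hχ x)]
      nlinarith [mul_nonneg (sub_nonneg.mpr (hχsup x))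
        (mul_nonneg (hχ x) (sq_nonneg ‖u x‖))]
    have hsq : L2sq (fun x => (χ x : ℂ) * u x)
        ≤ (⨆ x : Circ, Real.sqrt (χ x)) ^ 2
          * L2sq (fun x => (Real.sqrt (χ x) : ℂ) * u x) := by
      rw [L2sq, L2sq, ← integral_const_mul]
      exact integral_mono hint1 hint2 hpt
    calc Real.sqrt (L2sq fun x => (χ x : ℂ) * u x)
        ≤ Real.sqrt ((⨆ x : Circ, Real.sqrt (χ x)) ^ 2
          * L2sq (fun x => (Real.sqrt (χ x) : ℂ) * u x)) := Real.sqrt_le_sqrt hsq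
      _ = (⨆ x : Circ, Real.sqrt (χ x))
          * Real.sqrt (L2sq fun x => (Real.sqrt (χ x) : ℂ) * u x) := by
          rw [Real.sqrt_mul (sq_nonneg _), Real.sqrt_sq hsupnn]
  -- put everything together
  have hz2 : (0:ℝ) ≤ 1 / z ^ 2 := by positivity
  have hhz : (0:ℝ) ≤ h ^ (α/2) / |z| := by positivity
  calc L2norm (MultG G₀ h u) = Real.sqrt (2*π) * ‖vu‖ := hLeq
    _ ≤ Real.sqrt (2*π)
        * ((1/z^2) * ‖vf‖ + (1/z^2) * ‖vP‖ + (h^(α/2)/|z|) * ‖vχ‖) :=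
        mul_le_mul_of_nonneg_left htri (Real.sqrt_nonneg _)
    _ = (1/z^2) * (Real.sqrt (2*π) * ‖vf‖) + (1/z^2) * (Real.sqrt (2*π) * ‖vP‖)
        + (h^(α/2)/|z|) * (Real.sqrt (2*π) * ‖vχ‖) := by ring
    _ ≤ (1/z^2) * (((4:ℝ) ^ α)⁻¹ * L2norm u) + (1/z^2) * (1 * L2norm (Pop α h z χ u))
        + (h^(α/2)/|z|) * (1 * L2norm (fun x => (χ x : ℂ) * u x)) := by
        apply add_le_add (add_le_add (mul_le_mul_of_nonneg_left b1 hz2)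
          (mul_le_mul_of_nonneg_left b2 hz2)) (mul_le_mul_of_nonneg_left b3 hhz)
    _ ≤ (1/z^2) * (((4:ℝ) ^ α)⁻¹ * L2norm u) + (1/z^2) * (1 * L2norm (Pop α h z χ u))
        + (h^(α/2)/|z|) * (1 * ((⨆ x : Circ, Real.sqrt (χ x))
            * L2norm (fun x => (Real.sqrt (χ x) : ℂ) * u x))) := by
        apply add_le_add_right
        apply mul_le_mul_of_nonneg_left _ hhz
        rw [one_mul, one_mul]
        exact b4
    _ = (1 / ((4:ℝ) ^ α * z ^ 2)) * L2norm u
        + (1 / z ^ 2) * L2norm (Pop α h z χ u)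
        + (h ^ (α / 2) / |z|) * (⨆ x : Circ, Real.sqrt (χ x)) *
            L2norm (fun x => (Real.sqrt (χ x) : ℂ) * u x) := by
        rw [one_mul, one_mul]
        have h4 : ((4:ℝ) ^ α) ≠ 0 := by positivity
        field_simp

end
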